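/- Let X be a set and Y a proper subset of X with at least two elements, and let Q = {α ∈ T(X,Y) : α(X) ⊆ α(Y)}. The (nonempty two-sided) ideals of the semigroup Q are precisely the sets Q_r = {α ∈ Q : |α(X)| < r}, where r ranges over the cardinals with 1 < r ≤ |Y|⁺ (the successor cardinal of the cardinality of Y). -/

import Mathlib

universe u

/-- `α` belongs to `Q = {α ∈ T(X,Y) : α(X) ⊆ α(Y)}`. -/
def inQ {X : Type u} (Y : Set X) (α : X → X) : Prop :=
  Set.range α ⊆ Y ∧ Set.range α ⊆ α '' Y

/-!
Every `α ∈ Q` maps `Y` onto its whole image, so when `|β(X)| ≤ |α(X)|` one can write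
`β = δ ∘ α ∘ γ` with `γ, δ ∈ Q`: `γ` sends `x` into `Y` to a preimage under `α` of the point
of `α(X)` that encodes `β x` under an injection `β(X) ↪ α(X)`, and `δ` decodes it. Hence an
ideal contains every element of `Q` whose rank is at most the rank of one of its members, so
it is `Q_r` with `r` the supremum of the successors of these ranks. Conversely each `Q_r`
with `r > 1` is closed under composition with `Q` on both sides, since composition does not
increase rank, and it contains the constant maps into `Y`.
-/

open Cardinal Function Set

variable {X : Type u} {Y : Set X}

def IsQIdeal (Y : Set X) (I : Set (X → X)) : Prop :=
  I.Nonempty ∧ I ⊆ {α | inQ Y α} ∧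
    ∀ α ∈ I, ∀ β : X → X, inQ Y β → β ∘ α ∈ I ∧ α ∘ β ∈ I

lemma inQ_comp_of_range_subset {Z : Type*} {h : X → Z} {f : Z → X}
    (hh : range h ⊆ h '' Y) (hf : range f ⊆ Y) : inQ Y (f ∘ h) := by
  refine ⟨(range_comp_subset_range h f).trans hf, ?_⟩
  rintro _ ⟨x, rfl⟩
  obtain ⟨y, hy, hyx⟩ := hh (mem_range_self x)
  exact ⟨y, hy, congrArg f hyx⟩

lemma inQ.comp {α β : X → X} (hα : inQ Y α) (hβ : inQ Y β) : inQ Y (β ∘ α) :=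
  inQ_comp_of_range_subset hα.2 hβ.1

lemma inQ_const {y : X} (hy : y ∈ Y) : inQ Y (fun _ => y) := by
  constructor <;> rintro _ ⟨x, rfl⟩
  exacts [hy, ⟨y, hy, rfl⟩]

lemma mk_range_comp_le_left {α β : X → X} : #(range (β ∘ α)) ≤ #(range α) := by
  rw [range_comp]
  exact mk_image_le

lemma mk_range_comp_le_right {α β : X → X} : #(range (β ∘ α)) ≤ #(range β) :=
  mk_le_mk_of_subset (range_comp_subset_range α β)

lemma exists_inQ_comp_eq_of_mk_range_le {α β : X → X} (hα : inQ Y α) (hβ : inQ Y β)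
    (hle : #(range β) ≤ #(range α)) :
    ∃ γ δ : X → X, inQ Y γ ∧ inQ Y δ ∧ δ ∘ α ∘ γ = β := by
  obtain ⟨e⟩ := hle
  have hpreim : ∀ t : range α, ∃ y ∈ Y, α y = t := fun t => hα.2 t.2
  choose p hpY hpα using hpreim
  have he : Injective (Subtype.val ∘ e) := Subtype.val_injective.comp e.injective
  -- off the image of `e`, `δ` copies `β`, which keeps its range inside `β(X)`
  set δ : X → X := extend (Subtype.val ∘ e) Subtype.val β
  have hδe : ∀ s, δ (e s) = s := he.extend_apply _ _
  have hδ_range : range δ ⊆ range β := by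
    refine (range_extend_subset _ _ _).trans (union_subset ?_ (image_subset_range _ _))
    rw [Subtype.range_val]
  refine ⟨(fun s => p (e s)) ∘ rangeFactorization β, δ, ?_, ?_, ?_⟩
  · refine inQ_comp_of_range_subset ?_ (range_subset_iff.2 fun s => hpY _)
    rintro _ ⟨x, rfl⟩
    obtain ⟨y, hy, hyx⟩ := hβ.2 (mem_range_self x)
    exact ⟨y, hy, Subtype.ext hyx⟩
  · refine ⟨hδ_range.trans hβ.1, fun t ht => ?_⟩
    exact ⟨e ⟨t, hδ_range ht⟩, hα.1 (e _).2, hδe _⟩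
  · funext x
    simp only [comp_apply, hpα, hδe, rangeFactorization_coe]

lemma IsQIdeal.mem_of_mk_range_le {I : Set (X → X)} (hI : IsQIdeal Y I) {α β : X → X}
    (hα : α ∈ I) (hβ : inQ Y β) (hle : #(range β) ≤ #(range α)) : β ∈ I := by
  obtain ⟨γ, δ, hγ, hδ, rfl⟩ := exists_inQ_comp_eq_of_mk_range_le (hI.2.1 hα) hβ hle
  exact (hI.2.2 _ (hI.2.2 α hα γ hγ).2 δ hδ).1

lemma isQIdeal_setOf_mk_range_lt (hY : Y.Nonempty) {r : Cardinal.{u}} (hr : 1 < r) :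
    IsQIdeal Y {α | inQ Y α ∧ #(range α) < r} := by
  obtain ⟨y, hy⟩ := hY
  have : Nonempty X := ⟨y⟩
  refine ⟨⟨fun _ => y, inQ_const hy, ?_⟩, fun α hα => hα.1, ?_⟩
  · rwa [range_const, mk_singleton]
  · rintro α ⟨hα, hαr⟩ β hβ
    exact ⟨⟨hα.comp hβ, mk_range_comp_le_left.trans_lt hαr⟩,
      ⟨hβ.comp hα, mk_range_comp_le_right.trans_lt hαr⟩⟩

noncomputable def rankBound (I : Set (X → X)) : Cardinal.{u} :=
  ⨆ α : I, Order.succ #(range (α : X → X))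

lemma mk_range_lt_rankBound {I : Set (X → X)} {α : X → X} (hα : α ∈ I) :
    #(range α) < rankBound I :=
  (Order.lt_succ _).trans_le (le_ciSup bddAbove_of_small (⟨α, hα⟩ : I))

lemma IsQIdeal.eq_setOf_mk_range_lt_rankBound {I : Set (X → X)} (hI : IsQIdeal Y I) :
    I = {α | inQ Y α ∧ #(range α) < rankBound I} := by
  ext β
  refine ⟨fun hβ => ⟨hI.2.1 hβ, mk_range_lt_rankBound hβ⟩, ?_⟩
  rintro ⟨hβ, hβr⟩
  have : Nonempty I := hI.1.to_subtype
  obtain ⟨⟨α, hα⟩, hlt⟩ := exists_lt_of_lt_ciSup hβr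
  exact hI.mem_of_mk_range_le hα hβ (Order.lt_succ_iff.mp hlt)

lemma one_lt_rankBound [Nonempty X] {I : Set (X → X)} (hI : I.Nonempty) : 1 < rankBound I := by
  obtain ⟨α, hα⟩ := hI
  have : Nonempty (range α) := (range_nonempty α).to_subtype
  exact (Cardinal.one_le_iff_ne_zero.2 (mk_ne_zero _)).trans_lt (mk_range_lt_rankBound hα)

lemma rankBound_le_succ_mk {I : Set (X → X)} (hI : I ⊆ {α | inQ Y α}) :
    rankBound I ≤ Order.succ #Y :=
  ciSup_le' fun α => Order.succ_le_succ (mk_le_mk_of_subset (hI α.2).1)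

theorem ideals_of_Q_general {X : Type u} (Y : Set X) (hY : Y.Nontrivial)
    (I : Set (X → X)) :
    (I.Nonempty ∧ I ⊆ {α | inQ Y α} ∧
      ∀ α ∈ I, ∀ β : X → X, inQ Y β → β ∘ α ∈ I ∧ α ∘ β ∈ I) ↔
    ∃ r : Cardinal.{u}, 1 < r ∧ r ≤ Order.succ (Cardinal.mk ↥Y) ∧
      I = {α | inQ Y α ∧ Cardinal.mk (Set.range α) < r} := by
  have : Nonempty X := ⟨hY.nonempty.some⟩
  constructor
  · intro hI
    exact ⟨rankBound I, one_lt_rankBound hI.1, rankBound_le_succ_mk hI.2.1,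
      IsQIdeal.eq_setOf_mk_range_lt_rankBound hI⟩
  · rintro ⟨r, hr, -, rfl⟩
    exact isQIdeal_setOf_mk_range_lt hY.nonempty hr

/-- Let `X` be a set, `Y` a proper subset of `X` with at least two
elements, and `Q = {α ∈ T(X,Y) : α(X) ⊆ α(Y)}` (multiplication `α·β := β ∘ α`). The
nonempty two-sided ideals of the semigroup `Q` are precisely the sets
`Q_r = {α ∈ Q : |α(X)| < r}` for cardinals `r` with `1 < r ≤ |Y|⁺`. -/
theorem ideals_of_Q {X : Type u} (Y : Set X) (hY : Y.Nontrivial)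
    (hYX : Y ≠ Set.univ) (I : Set (X → X)) :
    (I.Nonempty ∧ I ⊆ {α | inQ Y α} ∧
      ∀ α ∈ I, ∀ β : X → X, inQ Y β → β ∘ α ∈ I ∧ α ∘ β ∈ I) ↔
    ∃ r : Cardinal.{u}, 1 < r ∧ r ≤ Order.succ (Cardinal.mk ↥Y) ∧
      I = {α | inQ Y α ∧ Cardinal.mk (Set.range α) < r} :=
  ideals_of_Q_general Y hY I
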